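/- arXiv:2401.17017 — 2 statements merged into one kernel-verified Lean document; each statement's English description precedes it below -/
import Mathlib

section
/- In AdS' = (-π/2, π/2) ×_cos ℝ, if t₁ ≤ t₂ and (t₁,x₁) ≤ (t₂,x₂), then the time separation is τ((t₁,x₁),(t₂,x₂)) = arccos(sin(t₁)sin(t₂) + cos(t₁)cos(t₂)cosh(x₂ - x₁)). -/
noncomputable section
open Real Set Filter

/-- A future-directed causal curve `s ↦ (α s, β s)` on `[a,b]` in the Lorentzian warped
product comparison space `I ×_f ℝ`, i.e. the spacetime `I × ℝ` with the continuous
metric `-dt² + f(t)² dx²` and time orientation `∂ₜ`. -/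
def IsCausalCurve (I : Set ℝ) (f : ℝ → ℝ) (a b : ℝ) (α β : ℝ → ℝ) : Prop :=
  a < b ∧ (∀ s ∈ Set.Icc a b, α s ∈ I) ∧
    (∀ s ∈ Set.Icc a b, DifferentiableAt ℝ α s ∧ DifferentiableAt ℝ β s) ∧
    (∀ s ∈ Set.Icc a b, 0 < deriv α s ∧ (f (α s)) ^ 2 * (deriv β s) ^ 2 ≤ (deriv α s) ^ 2)

/-- A future-directed timelike curve in `I ×_f ℝ`. -/
def IsTimelikeCurve (I : Set ℝ) (f : ℝ → ℝ) (a b : ℝ) (α β : ℝ → ℝ) : Prop :=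
  IsCausalCurve I f a b α β ∧
    ∀ s ∈ Set.Icc a b, (f (α s)) ^ 2 * (deriv β s) ^ 2 < (deriv α s) ^ 2

/-- The causal relation `≤` of `I ×_f ℝ`: there is a future-directed causal curve
from `p` to `q`, or `p = q`. -/
def causalRel (I : Set ℝ) (f : ℝ → ℝ) (p q : ℝ × ℝ) : Prop :=
  p = q ∨ ∃ a b α β, IsCausalCurve I f a b α β ∧
    α a = p.1 ∧ β a = p.2 ∧ α b = q.1 ∧ β b = q.2

/-- The chronological (timelike) relation `≪` of `I ×_f ℝ`. -/
def chronRel (I : Set ℝ) (f : ℝ → ℝ) (p q : ℝ × ℝ) : Prop :=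
  ∃ a b α β, IsTimelikeCurve I f a b α β ∧
    α a = p.1 ∧ β a = p.2 ∧ α b = q.1 ∧ β b = q.2

/-- The Lorentzian length `∫ √(α'² - f(α)² β'²)` of a causal curve in `I ×_f ℝ`. -/
def lorLength (f : ℝ → ℝ) (a b : ℝ) (α β : ℝ → ℝ) : ℝ :=
  ∫ s in a..b, Real.sqrt ((deriv α s) ^ 2 - (f (α s)) ^ 2 * (deriv β s) ^ 2)

/-- The time separation function of `I ×_f ℝ`: the supremum of Lorentzian lengths of
future-directed causal curves from `p` to `q` (and `0` if there are none). -/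
def timeSep (I : Set ℝ) (f : ℝ → ℝ) (p q : ℝ × ℝ) : ℝ :=
  sSup (insert 0 {L | ∃ a b α β, IsCausalCurve I f a b α β ∧
    α a = p.1 ∧ β a = p.2 ∧ α b = q.1 ∧ β b = q.2 ∧ L = lorLength f a b α β})

/-- The underlying interval `(-π/2, π/2)` of `AdS' = (-π/2,π/2) ×_cos ℝ`. -/
def adsStrip : Set ℝ := Set.Ioo (-(π / 2)) (π / 2)

/-!
Embed `AdS'` isometrically into `ℝ²'¹` by `(t, x) ↦ (sin t, cos t cosh x, cos t sinh x)`; then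
`C = sin t₁ sin t₂ + cos t₁ cos t₂ cosh (x₂ - x₁)` is minus the ambient inner product of the two
points. Along a causal curve inside the open future cone of a point `p`, `C(p, ·) < 1` does not
increase and, by the reverse Cauchy–Schwarz inequality in the tangent plane, the Lorentzian speed
is at most the derivative of `arccos C(p, ·)`; letting `p` tend to the initial point of the curve
bounds every length by `arccos C`.
When `C < 1` the bound is attained by an arc of a great circle `cos τ • P + sin τ • V` of the
hyperboloid, a unit-speed timelike geodesic of length `arccos C`; when `C ≥ 1` it is `0`.
-/

section WarpedProduct

variable {I : Set ℝ} {f : ℝ → ℝ} {a b : ℝ} {α β : ℝ → ℝ}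

lemma IsCausalCurve.abs_mul_deriv_le (hγ : IsCausalCurve I f a b α β) {s : ℝ}
    (hs : s ∈ Icc a b) : |f (α s) * deriv β s| ≤ deriv α s := by
  obtain ⟨hα', hcone⟩ := hγ.2.2.2 s hs
  exact abs_le_of_sq_le_sq (by rwa [mul_pow]) hα'.le

/-- If `w' = 1 / f` then `w ± x` are null coordinates of `I ×_f ℝ`, which cannot decrease along
a causal curve. -/
lemma IsCausalCurve.abs_sub_le (hγ : IsCausalCurve I f a b α β) (hf : ∀ t ∈ I, 0 < f t)
    {w : ℝ → ℝ} (hw : ∀ t ∈ I, HasDerivAt w (f t)⁻¹ t) :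
    ∀ s ∈ Icc a b, |β s - β a| ≤ w (α s) - w (α a) := by
  have hβ (s) (hs : s ∈ Icc a b) : HasDerivAt β (deriv β s) s :=
    ((hγ.2.2.1 s hs).2).hasDerivAt
  have hwα (s) (hs : s ∈ Icc a b) :
      HasDerivAt (fun r => w (α r) - w (α a)) ((f (α s))⁻¹ * deriv α s) s :=
    ((hw _ (hγ.2.1 s hs)).comp s (hγ.2.2.1 s hs).1.hasDerivAt).sub_const _
  refine image_norm_le_of_norm_deriv_right_le_deriv_boundary'
    (f := fun s => β s - β a) (fun s hs => ((hβ s hs).sub_const _).continuousAt.continuousWithinAt)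
    (fun s hs => ((hβ s (Ico_subset_Icc_self hs)).sub_const _).hasDerivWithinAt)
    (by simp) (fun s hs => (hwα s hs).continuousAt.continuousWithinAt)
    (fun s hs => (hwα s (Ico_subset_Icc_self hs)).hasDerivWithinAt)
    (fun s hs => ?_)
  have hs' := Ico_subset_Icc_self hs
  have hfα := hf _ (hγ.2.1 s hs')
  have h := hγ.abs_mul_deriv_le hs'
  rw [abs_mul, abs_of_pos hfα] at h
  rw [Real.norm_eq_abs, inv_mul_eq_div, le_div_iff₀ hfα]
  linarith

end WarpedProduct

/-- `F` is monotone, which also covers the case where the integrand is not integrable and the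
integral is junk. -/
lemma lorLength_le_sub_of_hasDerivAt {f : ℝ → ℝ} {a b : ℝ} {α β F F' : ℝ → ℝ} (hab : a ≤ b)
    (hF : ∀ s ∈ Icc a b, HasDerivAt F (F' s) s)
    (hle : ∀ s ∈ Icc a b, √(deriv α s ^ 2 - f (α s) ^ 2 * deriv β s ^ 2) ≤ F' s) :
    lorLength f a b α β ≤ F b - F a := by
  have hFc : ContinuousOn F (Icc a b) := fun s hs => (hF s hs).continuousAt.continuousWithinAt
  by_cases hint : IntervalIntegrable
      (fun s => √(deriv α s ^ 2 - f (α s) ^ 2 * deriv β s ^ 2)) MeasureTheory.volume a b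
  · exact intervalIntegral.integral_le_sub_of_hasDeriv_right_of_le hab hFc
      (fun s hs => (hF s (Ioo_subset_Icc_self hs)).hasDerivWithinAt)
      ((intervalIntegrable_iff_integrableOn_Icc_of_le hab).1 hint)
      (fun s hs => hle s (Ioo_subset_Icc_self hs))
  · have hmono : MonotoneOn F (Icc a b) := by
      refine monotoneOn_of_hasDerivWithinAt_nonneg (convex_Icc a b) hFc
        (fun s hs => (hF s (interior_subset hs)).hasDerivWithinAt)
        (fun s hs => (Real.sqrt_nonneg _).trans (hle s (interior_subset hs)))
    rw [lorLength, intervalIntegral.integral_undef hint, sub_nonneg]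
    exact hmono (left_mem_Icc.2 hab) (right_mem_Icc.2 hab) hab

/-- The conformal time `w = gd⁻¹ t` of `AdS'`: `-dt² + cos² t dx² = cos² t (-dw² + dx²)`. -/
def conformalTime (t : ℝ) : ℝ := arsinh (tan t)

lemma sinh_conformalTime (t : ℝ) : sinh (conformalTime t) = tan t := sinh_arsinh _

lemma cosh_conformalTime {t : ℝ} (ht : 0 < cos t) : cosh (conformalTime t) = (cos t)⁻¹ := by
  rw [conformalTime, cosh_arsinh, ← inv_inv (1 + tan t ^ 2), inv_one_add_tan_sq ht.ne',
    Real.sqrt_inv, Real.sqrt_sq ht.le]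

lemma hasDerivAt_conformalTime {t : ℝ} (ht : 0 < cos t) :
    HasDerivAt conformalTime (cos t)⁻¹ t := by
  have h : HasDerivAt conformalTime ((√(1 + tan t ^ 2))⁻¹ * (1 / cos t ^ 2)) t :=
    (hasDerivAt_arsinh (tan t)).comp t (hasDerivAt_tan ht.ne')
  rw [← cosh_arsinh, ← conformalTime, cosh_conformalTime ht] at h
  exact h.congr_deriv (by field_simp)

lemma conformalTime_strictMonoOn : StrictMonoOn conformalTime adsStrip :=
  arsinh_strictMono.comp_strictMonoOn strictMonoOn_tan

/-- `-⟪ι p, ι q⟫` for the isometric embedding `ι` of `AdS'` into `ℝ²'¹` (see `adsEmbed`); for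
timelike related points it is the cosine of their time separation. -/
def adsPairing (t₀ x₀ t x : ℝ) : ℝ := sin t₀ * sin t + cos t₀ * cos t * cosh (x - x₀)

lemma neg_one_lt_adsPairing {t₀ t : ℝ} (ht₀ : t₀ ∈ adsStrip) (ht : t ∈ adsStrip) (x₀ x : ℝ) :
    -1 < adsPairing t₀ x₀ t x := by
  have hc₀ := cos_pos_of_mem_Ioo ht₀
  have hc := cos_pos_of_mem_Ioo ht
  have hcosh : cos t₀ * cos t ≤ cos t₀ * cos t * cosh (x - x₀) :=
    le_mul_of_one_le_right (by positivity) (one_le_cosh _)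
  rw [adsPairing]
  nlinarith [sin_sq_add_cos_sq t₀, sin_sq_add_cos_sq t, sq_nonneg (sin t₀ + sin t),
    mul_pos hc₀ hc]

lemma one_sub_adsPairing {t₀ t : ℝ} (ht₀ : 0 < cos t₀) (ht : 0 < cos t) (x₀ x : ℝ) :
    1 - adsPairing t₀ x₀ t x =
      cos t₀ * cos t * (cosh (conformalTime t - conformalTime t₀) - cosh (x - x₀)) := by
  rw [adsPairing, cosh_sub (conformalTime t), cosh_conformalTime ht, cosh_conformalTime ht₀,
    sinh_conformalTime, sinh_conformalTime, tan_eq_sin_div_cos, tan_eq_sin_div_cos]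
  field_simp
  ring

lemma adsPairing_lt_one {t₀ x₀ t x : ℝ} (ht₀ : 0 < cos t₀) (ht : 0 < cos t)
    (hcone : |x - x₀| < conformalTime t - conformalTime t₀) : adsPairing t₀ x₀ t x < 1 := by
  have h : cosh (x - x₀) < cosh (conformalTime t - conformalTime t₀) :=
    cosh_lt_cosh.2 (hcone.trans_le (le_abs_self _))
  have := one_sub_adsPairing ht₀ ht x₀ x
  nlinarith [mul_pos ht₀ ht]

/-- Inside the future light cone of `(t₀, x₀)`, `adsPairing t₀ x₀` decreases along both null
directions `∂ₜ ± (cos t)⁻¹ ∂ₓ`: in conformal time this is the monotonicity of `sinh`. -/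
lemma adsPairing_null_deriv_nonpos {t₀ x₀ t x : ℝ} (ht₀ : 0 < cos t₀) (ht : 0 < cos t)
    (hcone : |x - x₀| ≤ conformalTime t - conformalTime t₀) :
    sin t₀ * cos t - cos t₀ * sin t * cosh (x - x₀) + cos t₀ * |sinh (x - x₀)| ≤ 0 := by
  have h : sin t₀ * cos t - cos t₀ * sin t * cosh (x - x₀) + cos t₀ * |sinh (x - x₀)| =
      cos t₀ * cos t *
        (sinh (conformalTime t₀) - sinh (conformalTime t - |x - x₀|)) := by
    rw [sinh_sub (conformalTime t), abs_sinh, cosh_abs, cosh_conformalTime ht, sinh_conformalTime,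
      sinh_conformalTime, tan_eq_sin_div_cos, tan_eq_sin_div_cos]
    field_simp
    ring
  rw [h]
  exact mul_nonpos_of_nonneg_of_nonpos (by positivity)
    (sub_nonpos.2 (sinh_le_sinh.2 (by linarith)))

def adsPairingDeriv (t₀ x₀ t x a' b' : ℝ) : ℝ :=
  a' * (sin t₀ * cos t - cos t₀ * sin t * cosh (x - x₀)) + cos t₀ * cos t * sinh (x - x₀) * b'

lemma HasDerivAt.adsPairing {t₀ x₀ s a' b' : ℝ} {α β : ℝ → ℝ} (hα : HasDerivAt α a' s)
    (hβ : HasDerivAt β b' s) :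
    HasDerivAt (fun r => adsPairing t₀ x₀ (α r) (β r))
      (adsPairingDeriv t₀ x₀ (α s) (β s) a' b') s := by
  have h : HasDerivAt (fun r => _root_.adsPairing t₀ x₀ (α r) (β r)) _ s :=
    (hα.sin.const_mul (Real.sin t₀)).add ((hα.cos.const_mul (Real.cos t₀)).mul
      (hβ.sub_const x₀).cosh)
  exact h.congr_deriv (by rw [adsPairingDeriv]; ring)

lemma adsPairingDeriv_nonpos {t₀ x₀ t x a' b' : ℝ} (ht₀ : 0 < cos t₀) (ht : 0 < cos t)
    (hcone : |x - x₀| ≤ conformalTime t - conformalTime t₀) (ha' : 0 ≤ a')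
    (hb' : |cos t * b'| ≤ a') : adsPairingDeriv t₀ x₀ t x a' b' ≤ 0 := by
  have hnull := adsPairing_null_deriv_nonpos ht₀ ht hcone
  have h : cos t₀ * cos t * sinh (x - x₀) * b' ≤ cos t₀ * |sinh (x - x₀)| * a' := by
    calc cos t₀ * cos t * sinh (x - x₀) * b'
        = cos t₀ * (sinh (x - x₀) * (cos t * b')) := by ring
      _ ≤ cos t₀ * (|sinh (x - x₀)| * a') := by
        refine mul_le_mul_of_nonneg_left ((le_abs_self _).trans ?_) ht₀.le
        rw [abs_mul]
        exact mul_le_mul_of_nonneg_left hb' (abs_nonneg _)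
      _ = cos t₀ * |sinh (x - x₀)| * a' := by ring
  rw [adsPairingDeriv]
  linarith [mul_nonpos_of_nonneg_of_nonpos ha' hnull]

/-- The reverse Cauchy–Schwarz inequality in the Lorentzian tangent plane `(ι (t, x))^⊥`. -/
lemma one_sub_adsPairing_sq_mul_le (t₀ x₀ t x a' b' : ℝ) :
    (1 - adsPairing t₀ x₀ t x ^ 2) * (a' ^ 2 - cos t ^ 2 * b' ^ 2) ≤
      adsPairingDeriv t₀ x₀ t x a' b' ^ 2 := by
  set u := sin t₀; set v := cos t₀; set σ := sin t; set c := cos t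
  set h := cosh (x - x₀); set g := sinh (x - x₀)
  have key : adsPairingDeriv t₀ x₀ t x a' b' ^ 2 -
      (1 - adsPairing t₀ x₀ t x ^ 2) * (a' ^ 2 - c ^ 2 * b' ^ 2) =
        (u * c ^ 2 * b' + v * g * a' - v * σ * c * h * b') ^ 2 := by
    rw [adsPairingDeriv, adsPairing]
    linear_combination
      (c^2*a'^2 - c^4*b'^2 + σ^2*a'^2 - σ^2*c^2*b'^2) * sin_sq_add_cos_sq t₀ +
      (a'^2 - c^2*b'^2 - v^2*a'^2 + v^2*h^2*a'^2 + v^2*c^2*b'^2 - v^2*c^2*h^2*b'^2) *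
        sin_sq_add_cos_sq t + (v^2*a'^2 - v^2*c^2*b'^2) * cosh_sq_sub_sinh_sq (x - x₀)
  linarith [sq_nonneg (u * c ^ 2 * b' + v * g * a' - v * σ * c * h * b')]

lemma sqrt_le_neg_one_div_sqrt_mul {c d L : ℝ} (hc : 0 < 1 - c ^ 2) (hd : d ≤ 0)
    (h : (1 - c ^ 2) * L ≤ d ^ 2) : √L ≤ -(1 / √(1 - c ^ 2)) * d :=
  calc √L ≤ √(d ^ 2 / (1 - c ^ 2)) := sqrt_le_sqrt (by rw [le_div_iff₀ hc]; linarith)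
    _ = -(1 / √(1 - c ^ 2)) * d := by
      rw [sqrt_div' _ hc.le, sqrt_sq_eq_abs, abs_of_nonpos hd]
      ring

/-- Inside the open future cone of `(t₀, x₀)`, `arccos ∘ adsPairing t₀ x₀` is smooth, and its
derivative along the curve dominates the Lorentzian speed. -/
lemma lorLength_le_arccos_of_abs_lt {t₀ x₀ a b : ℝ} {α β : ℝ → ℝ}
    (hγ : IsCausalCurve adsStrip cos a b α β) (ht₀ : t₀ ∈ adsStrip)
    (hcone : ∀ s ∈ Icc a b, |β s - x₀| < conformalTime (α s) - conformalTime t₀) :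
    lorLength cos a b α β ≤ arccos (adsPairing t₀ x₀ (α b) (β b)) := by
  have hc₀ := cos_pos_of_mem_Ioo ht₀
  have hcos (s) (hs : s ∈ Icc a b) : 0 < cos (α s) := cos_pos_of_mem_Ioo (hγ.2.1 s hs)
  have hlt (s) (hs : s ∈ Icc a b) : adsPairing t₀ x₀ (α s) (β s) < 1 :=
    adsPairing_lt_one hc₀ (hcos s hs) (hcone s hs)
  have hgt (s) (hs : s ∈ Icc a b) : -1 < adsPairing t₀ x₀ (α s) (β s) :=
    neg_one_lt_adsPairing ht₀ (hγ.2.1 s hs) _ _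
  have hderiv (s) (hs : s ∈ Icc a b) := (hasDerivAt_arccos (hgt s hs).ne' (hlt s hs).ne).comp s
    (HasDerivAt.adsPairing (t₀ := t₀) (x₀ := x₀) (hγ.2.2.1 s hs).1.hasDerivAt
      (hγ.2.2.1 s hs).2.hasDerivAt)
  refine (lorLength_le_sub_of_hasDerivAt hγ.1.le hderiv fun s hs => ?_).trans
    (sub_le_self _ (arccos_nonneg _))
  exact sqrt_le_neg_one_div_sqrt_mul (by nlinarith [hlt s hs, hgt s hs])
    (adsPairingDeriv_nonpos hc₀ (hcos s hs) (hcone s hs).le (hγ.2.2.2 s hs).1.le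
      (hγ.abs_mul_deriv_le hs))
    (one_sub_adsPairing_sq_mul_le _ _ _ _ _ _)

lemma IsCausalCurve.lorLength_le_arccos {a b : ℝ} {α β : ℝ → ℝ}
    (hγ : IsCausalCurve adsStrip cos a b α β) :
    lorLength cos a b α β ≤ arccos (adsPairing (α a) (β a) (α b) (β b)) := by
  have ha : α a ∈ adsStrip := hγ.2.1 a (left_mem_Icc.2 hγ.1.le)
  have hcone := hγ.abs_sub_le (fun t ht => cos_pos_of_mem_Ioo ht)
    (fun t ht => hasDerivAt_conformalTime (cos_pos_of_mem_Ioo ht))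
  have hcont : ContinuousAt (fun t₀ => arccos (adsPairing t₀ (β a) (α b) (β b))) (α a) := by
    unfold adsPairing
    fun_prop
  refine ge_of_tendsto (hcont.tendsto.mono_left (nhdsWithin_le_nhds (s := Iio (α a)))) ?_
  filter_upwards [Ioo_mem_nhdsLT ha.1] with t₀ ht₀
  have ht₀' : t₀ ∈ adsStrip := ⟨ht₀.1, ht₀.2.trans ha.2⟩
  have hw := conformalTime_strictMonoOn ht₀' ha ht₀.2
  exact lorLength_le_arccos_of_abs_lt hγ ht₀' fun s hs => (hcone s hs).trans_lt (by linarith)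

/-- `AdS₂` is the hyperboloid `inner21 u u = -1`, with time directions `u₀` and `u₁`. -/
def inner21 (u v : Fin 3 → ℝ) : ℝ := u 2 * v 2 - u 0 * v 0 - u 1 * v 1

/-- The isometric embedding of `AdS'` onto the part `|u₂| < u₁` of the hyperboloid. -/
def adsEmbed (t x : ℝ) : Fin 3 → ℝ := ![sin t, cos t * cosh x, cos t * sinh x]

def adsChartT (u : Fin 3 → ℝ) : ℝ := arcsin (u 0)

def adsChartX (u : Fin 3 → ℝ) : ℝ := (log (u 1 + u 2) - log (u 1 - u 2)) / 2

lemma inner21_adsEmbed (t₀ x₀ t x : ℝ) :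
    inner21 (adsEmbed t₀ x₀) (adsEmbed t x) = -adsPairing t₀ x₀ t x := by
  simp only [inner21, adsEmbed, adsPairing, cosh_sub, Matrix.cons_val]
  ring

lemma adsPairing_self (t x : ℝ) : adsPairing t x t x = 1 := by
  simp [adsPairing, sin_sq_add_cos_sq, ← sq]

lemma adsEmbed_one_add_two (t x : ℝ) : adsEmbed t x 1 + adsEmbed t x 2 = cos t * exp x := by
  simp [adsEmbed, ← mul_add, cosh_add_sinh]

lemma adsEmbed_one_sub_two (t x : ℝ) : adsEmbed t x 1 - adsEmbed t x 2 = cos t * exp (-x) := by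
  simp [adsEmbed, ← mul_sub, cosh_sub_sinh]

lemma adsChartT_adsEmbed {t : ℝ} (ht : t ∈ adsStrip) (x : ℝ) : adsChartT (adsEmbed t x) = t := by
  simpa [adsChartT, adsEmbed] using arcsin_sin ht.1.le ht.2.le

lemma adsChartX_adsEmbed {t : ℝ} (ht : 0 < cos t) (x : ℝ) : adsChartX (adsEmbed t x) = x := by
  rw [adsChartX, adsEmbed_one_add_two, adsEmbed_one_sub_two, log_mul ht.ne' (exp_pos _).ne',
    log_mul ht.ne' (exp_pos _).ne', log_exp, log_exp]
  ring

lemma abs_adsEmbed_two_lt {t : ℝ} (ht : 0 < cos t) (x : ℝ) :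
    |adsEmbed t x 2| < adsEmbed t x 1 := by
  have hp := adsEmbed_one_add_two t x
  have hm := adsEmbed_one_sub_two t x
  rw [abs_lt]
  constructor <;> nlinarith [mul_pos ht (exp_pos x), mul_pos ht (exp_pos (-x))]

section Chart

variable {X : ℝ → Fin 3 → ℝ} {Y : Fin 3 → ℝ} {τ : ℝ}

lemma hasDerivAt_adsChartT (hX : HasDerivAt X Y τ) (h : |X τ 0| < 1) :
    HasDerivAt (adsChartT ∘ X) (Y 0 / √(1 - X τ 0 ^ 2)) τ := by
  obtain ⟨h₁, h₂⟩ := abs_lt.1 h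
  exact ((hasDerivAt_arcsin h₁.ne' h₂.ne).comp τ (hasDerivAt_pi.1 hX 0)).congr_deriv
    (by ring)

lemma hasDerivAt_adsChartX (hX : HasDerivAt X Y τ) (h : |X τ 2| < X τ 1) :
    HasDerivAt (adsChartX ∘ X)
      ((X τ 1 * Y 2 - X τ 2 * Y 1) / (X τ 1 ^ 2 - X τ 2 ^ 2)) τ := by
  obtain ⟨h₁, h₂⟩ := abs_lt.1 h
  have hp : HasDerivAt (fun r => X r 1 + X r 2) (Y 1 + Y 2) τ :=
    (hasDerivAt_pi.1 hX 1).add (hasDerivAt_pi.1 hX 2)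
  have hm : HasDerivAt (fun r => X r 1 - X r 2) (Y 1 - Y 2) τ :=
    (hasDerivAt_pi.1 hX 1).sub (hasDerivAt_pi.1 hX 2)
  refine (((hp.log (by linarith)).sub (hm.log (by linarith))).div_const 2).congr_deriv ?_
  have hsq : X τ 1 ^ 2 - X τ 2 ^ 2 ≠ 0 := by nlinarith
  field_simp [show X τ 1 - X τ 2 ≠ 0 by linarith, show X τ 1 + X τ 2 ≠ 0 by linarith]
  ring

end Chart

lemma one_sub_sq_eq_of_inner21_self {u : Fin 3 → ℝ} (hu : inner21 u u = -1) :
    1 - u 0 ^ 2 = u 1 ^ 2 - u 2 ^ 2 := by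
  rw [inner21] at hu
  linear_combination hu

lemma adsChart_speed {u v : Fin 3 → ℝ} (huu : inner21 u u = -1) (huv : inner21 u v = 0)
    (hvv : inner21 v v = -1) (h : |u 2| < u 1) :
    (v 0 / √(1 - u 0 ^ 2)) ^ 2 -
      cos (adsChartT u) ^ 2 * ((u 1 * v 2 - u 2 * v 1) / (u 1 ^ 2 - u 2 ^ 2)) ^ 2 = 1 := by
  have hρ := one_sub_sq_eq_of_inner21_self huu
  have hρpos : 0 < 1 - u 0 ^ 2 := by
    obtain ⟨h₁, h₂⟩ := abs_lt.1 h
    nlinarith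
  have key : v 0 ^ 2 - (u 1 * v 2 - u 2 * v 1) ^ 2 = 1 - u 0 ^ 2 := by
    rw [inner21] at huu huv hvv
    linear_combination (-2 * u 0 * v 0 - (u 2 * v 2 - u 0 * v 0 - u 1 * v 1)) * huv
      - (1 - u 0 ^ 2) * hvv + (-(1 - v 0 ^ 2) + (v 2 * v 2 - v 0 * v 0 - v 1 * v 1 + 1)) * huu
  rw [adsChartT, cos_arcsin, div_pow, sq_sqrt hρpos.le, ← hρ]
  field_simp
  linear_combination key

theorem isCausalCurve_adsChart {X Y : ℝ → Fin 3 → ℝ} {a b : ℝ} (hab : a < b)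
    (hX : ∀ τ ∈ Icc a b, HasDerivAt X (Y τ) τ)
    (hXX : ∀ τ ∈ Icc a b, inner21 (X τ) (X τ) = -1)
    (hXY : ∀ τ ∈ Icc a b, inner21 (X τ) (Y τ) = 0)
    (hYY : ∀ τ ∈ Icc a b, inner21 (Y τ) (Y τ) = -1)
    (hX₂ : ∀ τ ∈ Icc a b, |X τ 2| < X τ 1) (hY₀ : ∀ τ ∈ Icc a b, 0 < Y τ 0) :
    IsCausalCurve adsStrip cos a b (adsChartT ∘ X) (adsChartX ∘ X) ∧
      lorLength cos a b (adsChartT ∘ X) (adsChartX ∘ X) = b - a := by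
  have hρ (τ) (hτ : τ ∈ Icc a b) : 0 < 1 - X τ 0 ^ 2 := by
    obtain ⟨h₁, h₂⟩ := abs_lt.1 (hX₂ τ hτ)
    rw [one_sub_sq_eq_of_inner21_self (hXX τ hτ)]
    nlinarith
  have hX₀ (τ) (hτ : τ ∈ Icc a b) : |X τ 0| < 1 := by
    have := hρ τ hτ
    rw [← sq_lt_one_iff_abs_lt_one]
    linarith
  have hT (τ) (hτ : τ ∈ Icc a b) := hasDerivAt_adsChartT (hX τ hτ) (hX₀ τ hτ)
  have hS (τ) (hτ : τ ∈ Icc a b) := hasDerivAt_adsChartX (hX τ hτ) (hX₂ τ hτ)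
  have hspeed (τ) (hτ : τ ∈ Icc a b) : deriv (adsChartT ∘ X) τ ^ 2 -
      cos ((adsChartT ∘ X) τ) ^ 2 * deriv (adsChartX ∘ X) τ ^ 2 = 1 := by
    rw [(hT τ hτ).deriv, (hS τ hτ).deriv]
    exact adsChart_speed (hXX τ hτ) (hXY τ hτ) (hYY τ hτ) (hX₂ τ hτ)
  refine ⟨⟨hab, fun τ hτ => ?_, fun τ hτ => ⟨(hT τ hτ).differentiableAt,
    (hS τ hτ).differentiableAt⟩, fun τ hτ => ⟨?_, by nlinarith [hspeed τ hτ]⟩⟩, ?_⟩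
  · obtain ⟨h₁, h₂⟩ := abs_lt.1 (hX₀ τ hτ)
    exact ⟨neg_pi_div_two_lt_arcsin.2 h₁, arcsin_lt_pi_div_two.2 h₂⟩
  · rw [(hT τ hτ).deriv]
    exact div_pos (hY₀ τ hτ) (sqrt_pos.2 (hρ τ hτ))
  · rw [lorLength, intervalIntegral.integral_congr (g := fun _ => (1 : ℝ)) fun τ hτ => by
      rw [uIcc_of_le hab.le] at hτ
      simp only [hspeed τ hτ, sqrt_one]]
    simp

lemma sinusoid_pos {p v T τ : ℝ} (hT : T < π) (hτ : τ ∈ Icc 0 T) (h₀ : 0 < p)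
    (hT' : 0 < cos T * p + sin T * v) : 0 < cos τ * p + sin τ * v := by
  rcases hτ.1.eq_or_lt with rfl | hτ₀
  · simpa using h₀
  have hsτ : 0 < sin τ := sin_pos_of_pos_of_lt_pi hτ₀ (hτ.2.trans_lt hT)
  have hsT : 0 < sin T := sin_pos_of_pos_of_lt_pi (hτ₀.trans_le hτ.2) hT
  have hsTτ : 0 ≤ sin (T - τ) := sin_nonneg_of_nonneg_of_le_pi (by linarith [hτ.2]) (by linarith)
  have key : (cos τ * p + sin τ * v) * sin T =
      p * sin (T - τ) + (cos T * p + sin T * v) * sin τ := by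
    rw [sin_sub]
    ring
  refine pos_of_mul_pos_left ?_ hsT.le
  rw [key]
  exact add_pos_of_nonneg_of_pos (mul_nonneg h₀.le hsTτ) (mul_pos hT' hsτ)

/-- The geodesic of the hyperboloid through `P` with initial velocity `V`. -/
def greatCircle (P V : Fin 3 → ℝ) (τ : ℝ) : Fin 3 → ℝ := cos τ • P + sin τ • V

section GreatCircle

variable {P V : Fin 3 → ℝ}

lemma greatCircle_apply (P V : Fin 3 → ℝ) (τ : ℝ) (i : Fin 3) :
    greatCircle P V τ i = cos τ * P i + sin τ * V i := rfl

@[simp]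
lemma greatCircle_zero (P V : Fin 3 → ℝ) : greatCircle P V 0 = P := by
  simp [greatCircle]

lemma hasDerivAt_greatCircle (P V : Fin 3 → ℝ) (τ : ℝ) :
    HasDerivAt (greatCircle P V) (greatCircle V (-P) τ) τ := by
  refine (((hasDerivAt_cos τ).smul_const P).add ((hasDerivAt_sin τ).smul_const V)).congr_deriv ?_
  ext i
  simp only [greatCircle_apply, Pi.add_apply, Pi.smul_apply, Pi.neg_apply, smul_eq_mul]
  ring

lemma inner21_greatCircle_self (hPP : inner21 P P = -1) (hPV : inner21 P V = 0)
    (hVV : inner21 V V = -1) (τ : ℝ) : inner21 (greatCircle P V τ) (greatCircle P V τ) = -1 := by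
  simp only [inner21, greatCircle_apply] at *
  linear_combination cos τ ^ 2 * hPP + 2 * sin τ * cos τ * hPV + sin τ ^ 2 * hVV
    - sin_sq_add_cos_sq τ

lemma inner21_greatCircle_rotate (hPP : inner21 P P = -1) (hPV : inner21 P V = 0)
    (hVV : inner21 V V = -1) (τ : ℝ) : inner21 (greatCircle P V τ) (greatCircle V (-P) τ) = 0 := by
  simp only [inner21, greatCircle_apply, Pi.neg_apply] at *
  linear_combination sin τ * cos τ * (hVV - hPP) + (cos τ ^ 2 - sin τ ^ 2) * hPV

lemma inner21_greatCircle_rotate_self (hPP : inner21 P P = -1) (hPV : inner21 P V = 0)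
    (hVV : inner21 V V = -1) (τ : ℝ) :
    inner21 (greatCircle V (-P) τ) (greatCircle V (-P) τ) = -1 := by
  simp only [inner21, greatCircle_apply, Pi.neg_apply] at *
  linear_combination cos τ ^ 2 * hVV - 2 * sin τ * cos τ * hPV + sin τ ^ 2 * hPP
    - sin_sq_add_cos_sq τ

variable {Q : Fin 3 → ℝ} {T : ℝ}

lemma greatCircle_chord (hPP : inner21 P P = -1) (hQQ : inner21 Q Q = -1)
    (hPQ : inner21 P Q = -cos T) (hT : sin T ≠ 0) :
    let V := (sin T)⁻¹ • (Q - cos T • P)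
    inner21 P V = 0 ∧ inner21 V V = -1 ∧ greatCircle P V T = Q ∧
      greatCircle V (-P) T = (sin T)⁻¹ • (cos T • Q - P) := by
  intro V
  simp only [V, inner21, greatCircle, Pi.smul_apply, Pi.sub_apply, smul_eq_mul] at *
  refine ⟨?_, ?_, ?_, ?_⟩
  · linear_combination (sin T)⁻¹ * (hPQ - cos T * hPP)
  · field_simp
    linear_combination hQQ - 2 * cos T * hPQ + cos T ^ 2 * hPP + sin_sq_add_cos_sq T
  · ext i
    simp only [Pi.add_apply, Pi.smul_apply, Pi.sub_apply, smul_eq_mul]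
    field_simp
    ring
  · ext i
    simp only [Pi.add_apply, Pi.smul_apply, Pi.sub_apply, Pi.neg_apply, smul_eq_mul]
    field_simp
    linear_combination -P i * sin_sq_add_cos_sq T

lemma abs_greatCircle_two_lt {τ : ℝ} (hT : T < π) (hτ : τ ∈ Icc 0 T) (h₀ : |P 2| < P 1)
    (hT' : |greatCircle P V T 2| < greatCircle P V T 1) :
    |greatCircle P V τ 2| < greatCircle P V τ 1 := by
  simp only [greatCircle_apply, abs_lt] at *
  have hsum := sinusoid_pos (p := P 1 + P 2) (v := V 1 + V 2) hT hτ (by linarith) (by linarith)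
  have hdiff := sinusoid_pos (p := P 1 - P 2) (v := V 1 - V 2) hT hτ (by linarith) (by linarith)
  constructor <;> linarith

end GreatCircle

lemma neg_mem_adsStrip {t : ℝ} (ht : t ∈ adsStrip) : -t ∈ adsStrip :=
  ⟨neg_lt_neg ht.2, by linarith [ht.1]⟩

lemma lt_of_adsPairing_lt_one {t₁ x₁ t₂ x₂ : ℝ} (hle : t₁ ≤ t₂)
    (hC : adsPairing t₁ x₁ t₂ x₂ < 1) : t₁ < t₂ := by
  refine hle.lt_of_ne fun h => hC.not_ge ?_
  subst h
  have := mul_le_mul_of_nonneg_left (one_le_cosh (x₂ - x₁)) (sq_nonneg (cos t₁))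
  rw [adsPairing]
  nlinarith [sin_sq_add_cos_sq t₁]

lemma sin_sub_adsPairing_mul_sin_pos {t₁ x₁ t₂ x₂ : ℝ} (h₁ : t₁ ∈ adsStrip)
    (h₂ : t₂ ∈ adsStrip) (hle : t₁ ≤ t₂) (hC : adsPairing t₁ x₁ t₂ x₂ < 1) :
    0 < sin t₂ - adsPairing t₁ x₁ t₂ x₂ * sin t₁ := by
  have hlt := lt_of_adsPairing_lt_one hle hC
  have hsin : sin t₁ < sin t₂ :=
    strictMonoOn_sin ⟨h₁.1.le, h₁.2.le⟩ ⟨h₂.1.le, h₂.2.le⟩ hlt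
  rcases le_or_gt (sin t₁) 0 with hs₁ | hs₁
  · have hc₁ := cos_pos_of_mem_Ioo h₁
    have hsub : 0 < sin t₂ * cos t₁ - cos t₂ * sin t₁ := by
      rw [← sin_sub]
      exact sin_pos_of_pos_of_lt_pi (by linarith) (by linarith [h₁.1, h₂.2])
    have hcosh := mul_le_mul_of_nonneg_left (one_le_cosh (x₂ - x₁))
      (mul_nonneg (cos_pos_of_mem_Ioo h₁).le (cos_pos_of_mem_Ioo h₂).le)
    rw [adsPairing]
    nlinarith [mul_pos hc₁ hsub, sin_sq_add_cos_sq t₁]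
  · nlinarith

lemma adsPairing_mul_sin_sub_sin_pos {t₁ x₁ t₂ x₂ : ℝ} (h₁ : t₁ ∈ adsStrip)
    (h₂ : t₂ ∈ adsStrip) (hle : t₁ ≤ t₂) (hC : adsPairing t₁ x₁ t₂ x₂ < 1) :
    0 < adsPairing t₁ x₁ t₂ x₂ * sin t₂ - sin t₁ := by
  have hsymm : adsPairing (-t₂) x₂ (-t₁) x₁ = adsPairing t₁ x₁ t₂ x₂ := by
    rw [adsPairing, adsPairing, ← cosh_neg, neg_sub]
    simp only [sin_neg, cos_neg]
    ring
  have h := sin_sub_adsPairing_mul_sin_pos (x₁ := x₂) (x₂ := x₁) (neg_mem_adsStrip h₂)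
    (neg_mem_adsStrip h₁) (neg_le_neg hle) (hsymm ▸ hC)
  rw [hsymm, sin_neg, sin_neg] at h
  linarith

theorem exists_isCausalCurve_lorLength_eq_arccos {t₁ x₁ t₂ x₂ : ℝ} (h₁ : t₁ ∈ adsStrip)
    (h₂ : t₂ ∈ adsStrip) (hle : t₁ ≤ t₂) (hC : adsPairing t₁ x₁ t₂ x₂ < 1) :
    ∃ a b α β, IsCausalCurve adsStrip cos a b α β ∧ α a = t₁ ∧ β a = x₁ ∧ α b = t₂ ∧
      β b = x₂ ∧ lorLength cos a b α β = arccos (adsPairing t₁ x₁ t₂ x₂) := by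
  have hc₁ := cos_pos_of_mem_Ioo h₁
  have hc₂ := cos_pos_of_mem_Ioo h₂
  have hC' := neg_one_lt_adsPairing h₁ h₂ x₁ x₂
  set T := arccos (adsPairing t₁ x₁ t₂ x₂)
  have hT₀ : 0 < T := arccos_pos.2 hC
  have hTπ : T < π := arccos_lt_pi.2 hC'
  have hsT : 0 < sin T := sin_pos_of_pos_of_lt_pi hT₀ hTπ
  have hcT : cos T = adsPairing t₁ x₁ t₂ x₂ := cos_arccos hC'.le hC.le
  set P := adsEmbed t₁ x₁
  set Q := adsEmbed t₂ x₂
  have hPP : inner21 P P = -1 := by rw [inner21_adsEmbed, adsPairing_self]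
  obtain ⟨hPV, hVV, hXT, hYT⟩ := greatCircle_chord (Q := Q) (T := T) hPP
    (by rw [inner21_adsEmbed, adsPairing_self]) (by rw [inner21_adsEmbed, hcT]) hsT.ne'
  set V := (sin T)⁻¹ • (Q - cos T • P)
  have hX₂ (τ) (hτ : τ ∈ Icc 0 T) : |greatCircle P V τ 2| < greatCircle P V τ 1 :=
    abs_greatCircle_two_lt hTπ hτ (abs_adsEmbed_two_lt hc₁ x₁) (hXT ▸ abs_adsEmbed_two_lt hc₂ x₂)
  have hY₀ (τ) (hτ : τ ∈ Icc 0 T) : 0 < greatCircle V (-P) τ 0 := by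
    refine sinusoid_pos hTπ hτ (mul_pos (inv_pos.2 hsT) ?_) ?_
    · rw [hcT]
      exact sin_sub_adsPairing_mul_sin_pos h₁ h₂ hle hC
    · rw [← greatCircle_apply, hYT]
      refine mul_pos (inv_pos.2 hsT) ?_
      rw [hcT]
      exact adsPairing_mul_sin_sub_sin_pos h₁ h₂ hle hC
  obtain ⟨hγ, hlen⟩ := isCausalCurve_adsChart hT₀ (fun τ _ => hasDerivAt_greatCircle P V τ)
    (fun τ _ => inner21_greatCircle_self hPP hPV hVV τ)
    (fun τ _ => inner21_greatCircle_rotate hPP hPV hVV τ)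
    (fun τ _ => inner21_greatCircle_rotate_self hPP hPV hVV τ) hX₂ hY₀
  refine ⟨0, T, _, _, hγ, ?_, ?_, ?_, ?_, by rw [hlen, sub_zero]⟩
  · simp only [Function.comp_apply, greatCircle_zero, P, adsChartT_adsEmbed h₁]
  · simp only [Function.comp_apply, greatCircle_zero, P, adsChartX_adsEmbed hc₁]
  · simp only [Function.comp_apply, hXT, Q, adsChartT_adsEmbed h₂]
  · simp only [Function.comp_apply, hXT, Q, adsChartX_adsEmbed hc₂]

theorem adsPrime_timeSep_general (t₁ x₁ t₂ x₂ : ℝ) (h₁ : t₁ ∈ adsStrip) (h₂ : t₂ ∈ adsStrip)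
    (hle : t₁ ≤ t₂) :
    timeSep adsStrip Real.cos (t₁, x₁) (t₂, x₂) =
      Real.arccos (Real.sin t₁ * Real.sin t₂ +
        Real.cos t₁ * Real.cos t₂ * Real.cosh (x₂ - x₁)) := by
  refine IsGreatest.csSup_eq ⟨?_, ?_⟩
  · rcases lt_or_ge (adsPairing t₁ x₁ t₂ x₂) 1 with hC | hC
    · obtain ⟨a, b, α, β, hγ, ha, hb, ha', hb', hlen⟩ :=
        exists_isCausalCurve_lorLength_eq_arccos h₁ h₂ hle hC
      exact Or.inr ⟨a, b, α, β, hγ, ha, hb, ha', hb', hlen.symm⟩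
    · exact Or.inl (arccos_eq_zero.2 hC)
  · rintro L (rfl | ⟨a, b, α, β, hγ, ha, hb, ha', hb', rfl⟩)
    · exact arccos_nonneg _
    · have h := hγ.lorLength_le_arccos
      rw [ha, hb, ha', hb'] at h
      exact h

/-- In `AdS' = (-π/2, π/2) ×_cos ℝ`, if `t₁ ≤ t₂` and `(t₁,x₁) ≤ (t₂,x₂)`, then the time
separation is `arccos (sin t₁ sin t₂ + cos t₁ cos t₂ cosh (x₂ - x₁))`. -/
theorem adsPrime_timeSep (t₁ x₁ t₂ x₂ : ℝ) (h₁ : t₁ ∈ adsStrip) (h₂ : t₂ ∈ adsStrip)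
    (hle : t₁ ≤ t₂) (hc : causalRel adsStrip Real.cos (t₁, x₁) (t₂, x₂)) :
    timeSep adsStrip Real.cos (t₁, x₁) (t₂, x₂) =
      Real.arccos (Real.sin t₁ * Real.sin t₂ +
        Real.cos t₁ * Real.cos t₂ * Real.cosh (x₂ - x₁)) :=
  adsPrime_timeSep_general t₁ x₁ t₂ x₂ h₁ h₂ hle
end
end

section
/- In a Lorentzian warped product comparison space I ×_f ℝ (I ⊆ ℝ an open interval, f : I → (0,∞) continuous), any reparametrized null distance-realizing curve is of the form γ(t) = (t, x₀ ± ∫_{t₀}^t (1/f(λ)) dλ), and consequently two points (s,x) and (t,y) are causally related if and only if s ≤ t and |x - y| ≤ ∫_s^t (1/f(λ)) dλ, and timelike related if and only if both inequalities are strict. -/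
noncomputable section
open Real Set Filter

/-!
Let `F` be a primitive of `1/f`. In the coordinates `(F(t), x)` the metric becomes
`f(t)² (-du² + dx²)`, conformal to two-dimensional Minkowski space, so a curve `(α, β)` is
causal exactly when `F ∘ α - β` and `F ∘ α + β` are nondecreasing (increasing, if timelike).
This gives `|Δx| ≤ ΔF` along causal curves, and the conformal lines `x + c F` with `|c| ≤ 1`
realise every such pair of endpoints. A causal curve with `|Δx| < ΔF` can be replaced by a
conformal line with `|c| < 1`, of positive length, so a curve with zero time separation between
its endpoints has `|Δx| = ΔF`; then one of `F ∘ α ∓ β` is constant, which is the claimed form.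
-/

open MeasureTheory

section OneDivPrimitive

variable {I : Set ℝ} {f : ℝ → ℝ}

theorem intervalIntegrable_one_div_of_mem (hIc : I.OrdConnected) (hf : ContinuousOn f I)
    (hfpos : ∀ t ∈ I, 0 < f t) {s t : ℝ} (hs : s ∈ I) (ht : t ∈ I) :
    IntervalIntegrable (fun l => 1 / f l) volume s t :=
  have hsub := hIc.uIcc_subset hs ht
  (continuousOn_const.div (hf.mono hsub) fun x hx => (hfpos x (hsub hx)).ne').intervalIntegrable

theorem integral_one_div_pos_of_mem (hIc : I.OrdConnected) (hf : ContinuousOn f I)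
    (hfpos : ∀ t ∈ I, 0 < f t) {s t : ℝ} (hs : s ∈ I) (ht : t ∈ I) (hst : s < t) :
    0 < ∫ l in s..t, 1 / f l :=
  intervalIntegral.intervalIntegral_pos_of_pos_on
    (intervalIntegrable_one_div_of_mem hIc hf hfpos hs ht)
    (fun u hu => one_div_pos.2 (hfpos u (hIc.out hs ht (Ioo_subset_Icc_self hu)))) hst

theorem hasDerivAt_integral_one_div (hIo : IsOpen I) (hIc : I.OrdConnected)
    (hf : ContinuousOn f I) (hfpos : ∀ t ∈ I, 0 < f t) {s u : ℝ} (hs : s ∈ I) (hu : u ∈ I) :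
    HasDerivAt (fun v => ∫ l in s..v, 1 / f l) (1 / f u) u := by
  have hcont : ∀ x ∈ I, ContinuousAt (fun l => 1 / f l) x := fun x hx =>
    continuousAt_const.div (hf.continuousAt (hIo.mem_nhds hx)) (hfpos x hx).ne'
  exact intervalIntegral.integral_hasDerivAt_right
    (intervalIntegrable_one_div_of_mem hIc hf hfpos hs hu)
    (ContinuousAt.stronglyMeasurableAtFilter hIo hcont u hu) (hcont u hu)

end OneDivPrimitive

theorem le_div_of_sq_mul_sq_le {a b c : ℝ} (ha : 0 ≤ a) (hc : 0 < c)
    (h : c ^ 2 * b ^ 2 ≤ a ^ 2) : b ≤ a / c := by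
  rw [le_div_iff₀ hc]
  exact (le_abs_self _).trans (abs_le_of_sq_le_sq (by rwa [mul_pow, mul_comm]) ha)

theorem lt_div_of_sq_mul_sq_lt {a b c : ℝ} (ha : 0 ≤ a) (hc : 0 < c)
    (h : c ^ 2 * b ^ 2 < a ^ 2) : b < a / c := by
  rw [lt_div_iff₀ hc]
  exact (le_abs_self _).trans_lt (abs_lt_of_sq_lt_sq (by rwa [mul_pow, mul_comm]) ha)

section CausalCurves

variable {I : Set ℝ} {f : ℝ → ℝ} {a b : ℝ} {α β : ℝ → ℝ}

theorem IsCausalCurve.neg (hC : IsCausalCurve I f a b α β) : IsCausalCurve I f a b α (-β) := by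
  obtain ⟨hab, hmem, hdiff, hcau⟩ := hC
  refine ⟨hab, hmem, fun s hs => ⟨(hdiff s hs).1, (hdiff s hs).2.neg⟩, fun s hs => ?_⟩
  rw [deriv.neg, neg_sq]
  exact hcau s hs

theorem IsTimelikeCurve.neg (hT : IsTimelikeCurve I f a b α β) :
    IsTimelikeCurve I f a b α (-β) :=
  ⟨hT.1.neg, fun s hs => by rw [deriv.neg, neg_sq]; exact hT.2 s hs⟩

theorem IsCausalCurve.strictMonoOn_fst (hC : IsCausalCurve I f a b α β) :
    StrictMonoOn α (Icc a b) :=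
  strictMonoOn_of_deriv_pos (convex_Icc a b)
    (fun l hl => (hC.2.2.1 l hl).1.continuousAt.continuousWithinAt)
    (by rw [interior_Icc]; exact fun l hl => (hC.2.2.2 l (Ioo_subset_Icc_self hl)).1)

theorem IsCausalCurve.fst_lt (hC : IsCausalCurve I f a b α β) : α a < α b :=
  hC.strictMonoOn_fst (left_mem_Icc.2 hC.1.le) (right_mem_Icc.2 hC.1.le) hC.1

theorem IsCausalCurve.hasDerivAt_integral_sub (hIo : IsOpen I) (hIc : I.OrdConnected)
    (hf : ContinuousOn f I) (hfpos : ∀ t ∈ I, 0 < f t) (hC : IsCausalCurve I f a b α β)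
    {c : ℝ} (hc : c ∈ I) {l : ℝ} (hl : l ∈ Icc a b) :
    HasDerivAt (fun l => (∫ u in c..α l, 1 / f u) - β l)
      (deriv α l / f (α l) - deriv β l) l := by
  have hprim := hasDerivAt_integral_one_div hIo hIc hf hfpos hc (hC.2.1 l hl)
  have h := (hprim.comp l (hC.2.2.1 l hl).1.hasDerivAt).sub (hC.2.2.1 l hl).2.hasDerivAt
  rwa [one_div_mul_eq_div] at h

theorem IsCausalCurve.monotoneOn_integral_sub (hIo : IsOpen I) (hIc : I.OrdConnected)
    (hf : ContinuousOn f I) (hfpos : ∀ t ∈ I, 0 < f t) (hC : IsCausalCurve I f a b α β) :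
    MonotoneOn (fun l => (∫ u in α a..α l, 1 / f u) - β l) (Icc a b) := by
  have hd := fun l (hl : l ∈ Icc a b) =>
    hC.hasDerivAt_integral_sub hIo hIc hf hfpos (hC.2.1 a (left_mem_Icc.2 hC.1.le)) hl
  refine monotoneOn_of_deriv_nonneg (convex_Icc a b)
    (fun l hl => (hd l hl).continuousAt.continuousWithinAt) ?_ ?_ <;> rw [interior_Icc]
  · exact fun l hl => (hd l (Ioo_subset_Icc_self hl)).differentiableAt.differentiableWithinAt
  · intro l hl
    have hl' := Ioo_subset_Icc_self hl
    rw [(hd l hl').deriv, sub_nonneg]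
    exact le_div_of_sq_mul_sq_le (hC.2.2.2 l hl').1.le (hfpos _ (hC.2.1 l hl'))
      (hC.2.2.2 l hl').2

theorem IsTimelikeCurve.strictMonoOn_integral_sub (hIo : IsOpen I) (hIc : I.OrdConnected)
    (hf : ContinuousOn f I) (hfpos : ∀ t ∈ I, 0 < f t) (hT : IsTimelikeCurve I f a b α β) :
    StrictMonoOn (fun l => (∫ u in α a..α l, 1 / f u) - β l) (Icc a b) := by
  have hC := hT.1
  have hd := fun l (hl : l ∈ Icc a b) =>
    hC.hasDerivAt_integral_sub hIo hIc hf hfpos (hC.2.1 a (left_mem_Icc.2 hC.1.le)) hl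
  refine strictMonoOn_of_deriv_pos (convex_Icc a b)
    (fun l hl => (hd l hl).continuousAt.continuousWithinAt) ?_
  rw [interior_Icc]
  intro l hl
  have hl' := Ioo_subset_Icc_self hl
  rw [(hd l hl').deriv, sub_pos]
  exact lt_div_of_sq_mul_sq_lt (hC.2.2.2 l hl').1.le (hfpos _ (hC.2.1 l hl')) (hT.2 l hl')

theorem IsCausalCurve.abs_sub_le_integral (hIo : IsOpen I) (hIc : I.OrdConnected)
    (hf : ContinuousOn f I) (hfpos : ∀ t ∈ I, 0 < f t) (hC : IsCausalCurve I f a b α β) :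
    |β b - β a| ≤ ∫ u in α a..α b, 1 / f u := by
  have hmono := fun {β} (hC : IsCausalCurve I f a b α β) =>
    hC.monotoneOn_integral_sub hIo hIc hf hfpos (left_mem_Icc.2 hC.1.le)
      (right_mem_Icc.2 hC.1.le) hC.1.le
  have h₁ := hmono hC
  have h₂ := hmono hC.neg
  simp only [intervalIntegral.integral_same, Pi.neg_apply] at h₁ h₂
  rw [abs_sub_le_iff]
  constructor <;> linarith

theorem IsTimelikeCurve.abs_sub_lt_integral (hIo : IsOpen I) (hIc : I.OrdConnected)
    (hf : ContinuousOn f I) (hfpos : ∀ t ∈ I, 0 < f t) (hT : IsTimelikeCurve I f a b α β) :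
    |β b - β a| < ∫ u in α a..α b, 1 / f u := by
  have hsmono := fun {β} (hT : IsTimelikeCurve I f a b α β) =>
    hT.strictMonoOn_integral_sub hIo hIc hf hfpos (left_mem_Icc.2 hT.1.1.le)
      (right_mem_Icc.2 hT.1.1.le) hT.1.1
  have h₁ := hsmono hT
  have h₂ := hsmono hT.neg
  simp only [intervalIntegral.integral_same, Pi.neg_apply] at h₁ h₂
  rw [abs_sub_lt_iff]
  constructor <;> linarith

theorem IsCausalCurve.eq_add_integral_of_sub_eq (hIo : IsOpen I) (hIc : I.OrdConnected)
    (hf : ContinuousOn f I) (hfpos : ∀ t ∈ I, 0 < f t) (hC : IsCausalCurve I f a b α β)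
    (h : β b - β a = ∫ u in α a..α b, 1 / f u) :
    ∀ t ∈ Icc a b, β t = β a + ∫ u in α a..α t, 1 / f u := by
  intro t ht
  have hmono := hC.monotoneOn_integral_sub hIo hIc hf hfpos
  have h₁ := hmono (left_mem_Icc.2 hC.1.le) ht ht.1
  have h₂ := hmono ht (right_mem_Icc.2 hC.1.le) ht.2
  simp only [intervalIntegral.integral_same] at h₁ h₂
  linarith

theorem IsCausalCurve.lorLength_le (hC : IsCausalCurve I f a b α β) :
    lorLength f a b α β ≤ α b - α a := by
  obtain ⟨hab, -, hdiff, hcau⟩ := id hC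
  by_cases hint : IntervalIntegrable
      (fun u => √(deriv α u ^ 2 - f (α u) ^ 2 * deriv β u ^ 2)) volume a b
  · refine intervalIntegral.integral_le_sub_of_hasDeriv_right_of_le hab.le
      (fun l hl => (hdiff l hl).1.continuousAt.continuousWithinAt)
      (fun l hl => (hdiff l (Ioo_subset_Icc_self hl)).1.hasDerivAt.hasDerivWithinAt)
      ((intervalIntegrable_iff_integrableOn_Icc_of_le hab.le).1 hint) fun l hl => ?_
    calc √(deriv α l ^ 2 - f (α l) ^ 2 * deriv β l ^ 2)
        ≤ √(deriv α l ^ 2) := Real.sqrt_le_sqrt (by nlinarith)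
      _ = deriv α l := Real.sqrt_sq (hcau l (Ioo_subset_Icc_self hl)).1.le
  · rw [lorLength, intervalIntegral.integral_undef hint, sub_nonneg]
    exact hC.fst_lt.le

theorem IsCausalCurve.lorLength_le_timeSep (hC : IsCausalCurve I f a b α β) :
    lorLength f a b α β ≤ timeSep I f (α a, β a) (α b, β b) := by
  refine le_csSup ⟨max (α b - α a) 0, ?_⟩
    (mem_insert_of_mem _ ⟨a, b, α, β, hC, rfl, rfl, rfl, rfl, rfl⟩)
  rintro L (rfl | ⟨a', b', α', β', hC', ha, -, hb, -, rfl⟩)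
  · exact le_max_right _ _
  · exact (hC'.lorLength_le.trans_eq (by rw [ha, hb])).trans (le_max_left _ _)

end CausalCurves

/-- The line of slope `c` through `(s, x)` in the conformally flat coordinates `(∫ 1/f, x)`. -/
def conformalLine (f : ℝ → ℝ) (s x c l : ℝ) : ℝ :=
  x + c * ∫ u in s..l, 1 / f u

section ConformalLine

variable {I : Set ℝ} {f : ℝ → ℝ} {s t x c : ℝ}

@[simp]
theorem conformalLine_self : conformalLine f s x c s = x := by
  simp [conformalLine]

theorem conformalLine_slope_apply {y : ℝ} (hD : ∫ u in s..t, 1 / f u ≠ 0) :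
    conformalLine f s x ((y - x) / ∫ u in s..t, 1 / f u) t = y := by
  rw [conformalLine, div_mul_cancel₀ _ hD]
  ring

theorem abs_slope_le_one_iff {y D : ℝ} (hD : 0 < D) : |(y - x) / D| ≤ 1 ↔ |x - y| ≤ D := by
  rw [abs_div, abs_of_pos hD, div_le_one hD, abs_sub_comm]

theorem abs_slope_lt_one_iff {y D : ℝ} (hD : 0 < D) : |(y - x) / D| < 1 ↔ |x - y| < D := by
  rw [abs_div, abs_of_pos hD, div_lt_one hD, abs_sub_comm]

theorem sq_mul_sq_deriv_conformalLine (hIo : IsOpen I) (hIc : I.OrdConnected)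
    (hf : ContinuousOn f I) (hfpos : ∀ t ∈ I, 0 < f t) (hs : s ∈ I) {l : ℝ} (hl : l ∈ I) :
    f l ^ 2 * deriv (conformalLine f s x c) l ^ 2 = c ^ 2 := by
  have hderiv : HasDerivAt (conformalLine f s x c) (c * (1 / f l)) l :=
    ((hasDerivAt_integral_one_div hIo hIc hf hfpos hs hl).const_mul c).const_add x
  have hfl := (hfpos l hl).ne'
  rw [hderiv.deriv]
  field_simp

theorem isCausalCurve_conformalLine (hIo : IsOpen I) (hIc : I.OrdConnected)
    (hf : ContinuousOn f I) (hfpos : ∀ t ∈ I, 0 < f t) (hs : s ∈ I) (ht : t ∈ I) (hst : s < t)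
    (hc : |c| ≤ 1) : IsCausalCurve I f s t id (conformalLine f s x c) := by
  have hsub := hIc.out hs ht
  refine ⟨hst, hsub, fun l hl => ⟨differentiableAt_id, ?_⟩, fun l hl => ?_⟩
  · exact ((hasDerivAt_integral_one_div hIo hIc hf hfpos hs (hsub hl)).const_mul c
      |>.const_add x).differentiableAt
  · rw [id, sq_mul_sq_deriv_conformalLine hIo hIc hf hfpos hs (hsub hl), deriv_id, one_pow]
    exact ⟨one_pos, (sq_le_one_iff_abs_le_one c).2 hc⟩

theorem isTimelikeCurve_conformalLine (hIo : IsOpen I) (hIc : I.OrdConnected)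
    (hf : ContinuousOn f I) (hfpos : ∀ t ∈ I, 0 < f t) (hs : s ∈ I) (ht : t ∈ I) (hst : s < t)
    (hc : |c| < 1) : IsTimelikeCurve I f s t id (conformalLine f s x c) := by
  refine ⟨isCausalCurve_conformalLine hIo hIc hf hfpos hs ht hst hc.le, fun l hl => ?_⟩
  rw [id, sq_mul_sq_deriv_conformalLine hIo hIc hf hfpos hs (hIc.out hs ht hl), deriv_id,
    one_pow]
  exact (sq_lt_one_iff_abs_lt_one c).2 hc

theorem lorLength_conformalLine (hIo : IsOpen I) (hIc : I.OrdConnected)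
    (hf : ContinuousOn f I) (hfpos : ∀ t ∈ I, 0 < f t) (hs : s ∈ I) (ht : t ∈ I)
    (hst : s ≤ t) : lorLength f s t id (conformalLine f s x c) = (t - s) * √(1 - c ^ 2) := by
  rw [lorLength, ← smul_eq_mul, ← intervalIntegral.integral_const]
  refine intervalIntegral.integral_congr fun l hl => ?_
  rw [uIcc_of_le hst] at hl
  rw [id, sq_mul_sq_deriv_conformalLine hIo hIc hf hfpos hs (hIc.out hs ht hl), deriv_id,
    one_pow]

end ConformalLine

section NullRealizers

variable {I : Set ℝ} {f : ℝ → ℝ} {a b : ℝ} {α β : ℝ → ℝ}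

theorem IsCausalCurve.abs_sub_eq_integral_of_timeSep_eq_zero (hIo : IsOpen I)
    (hIc : I.OrdConnected) (hf : ContinuousOn f I) (hfpos : ∀ t ∈ I, 0 < f t)
    (hC : IsCausalCurve I f a b α β) (h0 : timeSep I f (α a, β a) (α b, β b) = 0) :
    |β b - β a| = ∫ u in α a..α b, 1 / f u := by
  refine (hC.abs_sub_le_integral hIo hIc hf hfpos).antisymm (not_lt.1 fun hlt => ?_)
  have haI := hC.2.1 a (left_mem_Icc.2 hC.1.le)
  have hbI := hC.2.1 b (right_mem_Icc.2 hC.1.le)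
  have hD := integral_one_div_pos_of_mem hIc hf hfpos haI hbI hC.fst_lt
  set c := (β b - β a) / ∫ u in α a..α b, 1 / f u
  have hc : |c| < 1 := (abs_slope_lt_one_iff hD).2 (by rwa [abs_sub_comm])
  have hline := isCausalCurve_conformalLine (x := β a) hIo hIc hf hfpos haI hbI hC.fst_lt hc.le
  have hpos : 0 < lorLength f (α a) (α b) id (conformalLine f (α a) (β a) c) := by
    rw [lorLength_conformalLine hIo hIc hf hfpos haI hbI hC.fst_lt.le]
    exact mul_pos (sub_pos.2 hC.fst_lt)
      (Real.sqrt_pos.2 (sub_pos.2 ((sq_lt_one_iff_abs_lt_one c).2 hc)))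
  have hle := hline.lorLength_le_timeSep
  rw [id, id, conformalLine_self, conformalLine_slope_apply hD.ne', h0] at hle
  exact hpos.not_ge hle

theorem IsCausalCurve.eq_add_or_eq_sub_integral_of_timeSep_eq_zero (hIo : IsOpen I)
    (hIc : I.OrdConnected) (hf : ContinuousOn f I) (hfpos : ∀ t ∈ I, 0 < f t)
    (hC : IsCausalCurve I f a b α β) (h0 : timeSep I f (α a, β a) (α b, β b) = 0) :
    (∀ t ∈ Icc a b, β t = β a + ∫ u in α a..α t, 1 / f u) ∨
      (∀ t ∈ Icc a b, β t = β a - ∫ u in α a..α t, 1 / f u) := by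
  have hD := integral_one_div_pos_of_mem hIc hf hfpos (hC.2.1 a (left_mem_Icc.2 hC.1.le))
    (hC.2.1 b (right_mem_Icc.2 hC.1.le)) hC.fst_lt
  rcases (abs_eq hD.le).1 (hC.abs_sub_eq_integral_of_timeSep_eq_zero hIo hIc hf hfpos h0)
    with h | h
  · exact .inl (hC.eq_add_integral_of_sub_eq hIo hIc hf hfpos h)
  · refine .inr fun t ht => ?_
    have h' : (-β) b - (-β) a = ∫ u in α a..α b, 1 / f u := by
      simp only [Pi.neg_apply]
      linarith
    have := hC.neg.eq_add_integral_of_sub_eq hIo hIc hf hfpos h' t ht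
    simp only [Pi.neg_apply] at this
    linarith

end NullRealizers

section CausalRelations

variable {I : Set ℝ} {f : ℝ → ℝ} {s t x y : ℝ}

theorem causalRel_iff (hIo : IsOpen I) (hIc : I.OrdConnected) (hf : ContinuousOn f I)
    (hfpos : ∀ t ∈ I, 0 < f t) (hs : s ∈ I) (ht : t ∈ I) :
    causalRel I f (s, x) (t, y) ↔ s ≤ t ∧ |x - y| ≤ ∫ l in s..t, 1 / f l := by
  constructor
  · rintro (heq | ⟨a, b, α, β, hC, ha, hxa, hb, hyb⟩)
    · obtain ⟨rfl, rfl⟩ := Prod.mk.inj heq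
      simp
    · have hbound := hC.abs_sub_le_integral hIo hIc hf hfpos
      simp only at ha hxa hb hyb
      rw [ha, hb, hxa, hyb, abs_sub_comm] at hbound
      exact ⟨ha ▸ hb ▸ hC.fst_lt.le, hbound⟩
  · rintro ⟨hst, hxy⟩
    obtain rfl | hst := hst.eq_or_lt
    · left
      rw [intervalIntegral.integral_same, abs_nonpos_iff, sub_eq_zero] at hxy
      rw [hxy]
    · have hD := integral_one_div_pos_of_mem hIc hf hfpos hs ht hst
      exact .inr ⟨s, t, id, _, isCausalCurve_conformalLine hIo hIc hf hfpos hs ht hst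
        ((abs_slope_le_one_iff hD).2 hxy), rfl, conformalLine_self, rfl,
        conformalLine_slope_apply hD.ne'⟩

theorem chronRel_iff (hIo : IsOpen I) (hIc : I.OrdConnected) (hf : ContinuousOn f I)
    (hfpos : ∀ t ∈ I, 0 < f t) (hs : s ∈ I) (ht : t ∈ I) :
    chronRel I f (s, x) (t, y) ↔ s < t ∧ |x - y| < ∫ l in s..t, 1 / f l := by
  constructor
  · rintro ⟨a, b, α, β, hT, ha, hxa, hb, hyb⟩
    have hbound := hT.abs_sub_lt_integral hIo hIc hf hfpos
    simp only at ha hxa hb hyb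
    rw [ha, hb, hxa, hyb, abs_sub_comm] at hbound
    exact ⟨ha ▸ hb ▸ hT.1.fst_lt, hbound⟩
  · rintro ⟨hst, hxy⟩
    have hD := integral_one_div_pos_of_mem hIc hf hfpos hs ht hst
    exact ⟨s, t, id, _, isTimelikeCurve_conformalLine hIo hIc hf hfpos hs ht hst
      ((abs_slope_lt_one_iff hD).2 hxy), rfl, conformalLine_self, rfl,
      conformalLine_slope_apply hD.ne'⟩

end CausalRelations

/-- In a Lorentzian warped product comparison space `I ×_f ℝ` (`I` an open interval,
`f` continuous and positive on `I`): every null distance realizer, reparametrized by the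
`t`-coordinate, is of the form `t ↦ (t, β a ± ∫_a^t 1/f)`; consequently `(s,x) ≤ (t,y)`
iff `s ≤ t` and `|x - y| ≤ ∫_s^t 1/f`, and `(s,x) ≪ (t,y)` iff both inequalities are
strict. -/
theorem comparisonSpace_null_realizers_and_causality
    (I : Set ℝ) (hIo : IsOpen I) (hIc : I.OrdConnected)
    (f : ℝ → ℝ) (hf : ContinuousOn f I) (hfpos : ∀ t ∈ I, 0 < f t) :
    (∀ a b (β : ℝ → ℝ), IsCausalCurve I f a b id β →
        timeSep I f (a, β a) (b, β b) = 0 →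
        (∀ t ∈ Set.Icc a b, β t = β a + ∫ l in a..t, 1 / f l) ∨
        (∀ t ∈ Set.Icc a b, β t = β a - ∫ l in a..t, 1 / f l)) ∧
    (∀ s x t y, s ∈ I → t ∈ I →
        (causalRel I f (s, x) (t, y) ↔ s ≤ t ∧ |x - y| ≤ ∫ l in s..t, 1 / f l) ∧
        (chronRel I f (s, x) (t, y) ↔ s < t ∧ |x - y| < ∫ l in s..t, 1 / f l)) :=
  ⟨fun _ _ _ hC h0 => hC.eq_add_or_eq_sub_integral_of_timeSep_eq_zero hIo hIc hf hfpos h0,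
    fun _ _ _ _ hs ht =>
      ⟨causalRel_iff hIo hIc hf hfpos hs ht, chronRel_iff hIo hIc hf hfpos hs ht⟩⟩
end
end
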